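/- Let X be an affine G-embedding with base point x₀. If γ ∈ Γ(X, x₀) and γ is not the trivial one-parameter subgroup ε, then γ⁻¹ ∉ Γ(X, x₀). -/
import Mathlib


/-!
Formalization of statements from D. Murphy, *Affine embeddings of a reductive
group* (arXiv:1012.3967).

Since the theory of linear algebraic groups and of their embeddings is not
available in Mathlib, we axiomatize the setting of the paper.  The structure
`ReductiveGroup k` records a connected reductive linear algebraic group over
an algebraically closed field `k` of characteristic zero through its group of
`k`-points, together with the algebro-geometric structure used in the paper:
one-parameter subgroups, tori, characters, the parabolic subgroups `P(γ)`,
and the `k((t))`-points with the integral subgroup `G_{k[[t]]}` and its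
specialization map.  The structure `GroupCoordinates` records the coordinate
ring `k[G]`, translations, and the Luna–Vust valuations `v_γ` on the function
field `k(G)` (pinned down by the axiom `v_nonneg_iff`).  The structure
`AffineGEmbedding` records an affine `G`-embedding: a normal affine
`G`-variety, given by its points and its finitely generated coordinate ring
(with the Zariski topology), together with limits of one-parameter subgroups
(pinned down semantically by `limExists_iff` and `limit_spec`), limits of
`k((t))`-points, and the comorphisms `ψ_x^∘ : k[X] → k[G]` of the orbit maps
(pinned down by `psi_spec`).  All further notions of the paper — the cones
`Γ(X,x₀)`, equivalence of one-parameter subgroups, Kempf states, (strongly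
convex) lattice cones, one-skeletons, base points, equivariant morphisms,
biequivariant structures — are *defined* from these data, following the paper.
-/

noncomputable section

open scoped Classical

universe u

variable (k : Type u) [Field k] [IsAlgClosed k] [CharZero k]

/-- Axiomatized data of a connected reductive linear algebraic group `G` over
the algebraically closed field `k` (of characteristic zero), recorded through
its group of `k`-points. -/
structure ReductiveGroup where
  /-- the group `G = G(k)` of `k`-points -/
  G : Type u
  [grp : Group G]
  /-- `γ : 𝔾ₘ → G` (given on `k`-points) is an algebraic one-parameter subgroup -/
  isOnePS : (kˣ →* G) → Prop
  /-- `R ≤ G` is a subtorus -/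
  isTorus : Subgroup G → Prop
  /-- `P ≤ G` is a parabolic subgroup -/
  isParabolic : Subgroup G → Prop
  /-- `χ : R → 𝔾ₘ` is an algebraic character of the subgroup `R` -/
  isChar : (R : Subgroup G) → (↥R →* kˣ) → Prop
  /-- the degree of an algebraic endomorphism `t ↦ tⁿ` of `𝔾ₘ` -/
  deg : (kˣ →* kˣ) → ℤ
  /-- the parabolic subgroup `P(γ) = {g ∈ G : lim_{t→0} γ(t)gγ(t)⁻¹ exists}` -/
  Pparab : (kˣ →* G) → Subgroup G
  one_isOnePS : isOnePS 1
  conj_isOnePS : ∀ (g : G) (γ), isOnePS γ → isOnePS ((MulAut.conj g).toMonoidHom.comp γ)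
  inv_isOnePS : ∀ γ, isOnePS γ → isOnePS (γ.comp invMonoidHom)
  pow_isOnePS : ∀ γ (n : ℕ), isOnePS γ → isOnePS (γ.comp (powMonoidHom n))
  isTorus_comm : ∀ R, isTorus R → ∀ a ∈ R, ∀ b ∈ R, a * b = b * a
  /-- every one-parameter subgroup has its image in a maximal torus -/
  onePS_mem_maxTorus : ∀ γ, isOnePS γ →
    ∃ T, (isTorus T ∧ ∀ S, isTorus S → T ≤ S → S = T) ∧ γ.range ≤ T
  Pparab_isParabolic : ∀ γ, isOnePS γ → isParabolic (Pparab γ)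
  range_le_Pparab : ∀ (γ : kˣ →* G) (t : kˣ), γ t ∈ Pparab γ
  deg_pow : ∀ n : ℕ, deg (powMonoidHom n) = n
  /-- the group `G_{k((t))}` of `k((t))`-points of `G` -/
  GK : Type u
  [grpGK : Group GK]
  /-- constant points: `G(k) ⊆ G_{k((t))}` -/
  toGK : G →* GK
  toGK_injective : Function.Injective toGK
  /-- the subgroup `G_{k[[t]]}` of integral points -/
  GO : Subgroup GK
  toGK_mem_GO : ∀ g, toGK g ∈ GO
  /-- the specialization `t → 0` on integral points -/
  sp : ↥GO →* G
  sp_toGK : ∀ g : G, sp ⟨toGK g, toGK_mem_GO g⟩ = g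
  /-- the `k((t))`-point `⟨γ⟩` attached to a one-parameter subgroup -/
  psK : (kˣ →* G) → GK

attribute [instance] ReductiveGroup.grp ReductiveGroup.grpGK

namespace ReductiveGroup

variable {k}
variable (Gd : ReductiveGroup k)

/-- the conjugate one-parameter subgroup `g • γ : t ↦ g γ(t) g⁻¹` -/
def conjPS (g : Gd.G) (γ : kˣ →* Gd.G) : kˣ →* Gd.G :=
  (MulAut.conj g).toMonoidHom.comp γ

/-- the inverse one-parameter subgroup `γ⁻¹ : t ↦ γ(t⁻¹)` -/
def invPS (γ : kˣ →* Gd.G) : kˣ →* Gd.G := γ.comp invMonoidHom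

/-- the one-parameter subgroup `t ↦ γ(tⁿ)` -/
def powPS (γ : kˣ →* Gd.G) (n : ℕ) : kˣ →* Gd.G := γ.comp (powMonoidHom n)

/-- the pointwise product (i.e. the sum in a cocharacter lattice) of two
one-parameter subgroups with commuting images -/
def addPS (γ₁ γ₂ : kˣ →* Gd.G) (h : ∀ s t : kˣ, Commute (γ₁ s) (γ₂ t)) :
    kˣ →* Gd.G where
  toFun t := γ₁ t * γ₂ t
  map_one' := by simp
  map_mul' s t := by
    simp only [map_mul]
    exact (h t s).mul_mul_mul_comm (γ₁ s) (γ₂ t)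

/-- the cocharacter lattice `𝔛_*(T)` of a subgroup `T` of `G`, viewed inside
`𝔛_*(G)` -/
def cochar (T : Subgroup Gd.G) : Set (kˣ →* Gd.G) :=
  {γ | Gd.isOnePS γ ∧ γ.range ≤ T}

/-- `T` is a maximal torus of `G` -/
def IsMaxTorus (T : Subgroup Gd.G) : Prop :=
  Gd.isTorus T ∧ ∀ S, Gd.isTorus S → T ≤ S → S = T

/-- the equivalence relation on one-parameter subgroups:
`γ₁ ∼ γ₂` iff `γ₂(t^{n₂}) = g γ₁(t^{n₁}) g⁻¹` for some positive integers
`n₁, n₂` and some `g ∈ P(γ₁)` -/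
def PSEquiv (γ₁ γ₂ : kˣ →* Gd.G) : Prop :=
  ∃ (n₁ n₂ : ℕ) (g : Gd.G), 0 < n₁ ∧ 0 < n₂ ∧ g ∈ Gd.Pparab γ₁ ∧
    Gd.powPS γ₂ n₂ = Gd.conjPS g (Gd.powPS γ₁ n₁)

/-- `Δ_P(G) = {γ ∈ 𝔛_*(G) : P(γ) ⊇ P}` -/
def Delta (P : Subgroup Gd.G) : Set (kˣ →* Gd.G) :=
  {γ | Gd.isOnePS γ ∧ P ≤ Gd.Pparab γ}

/-- the conjugate `hΓh⁻¹` of a set of one-parameter subgroups -/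
def conjCone (g : Gd.G) (Γ : Set (kˣ →* Gd.G)) : Set (kˣ →* Gd.G) :=
  Gd.conjPS g '' Γ

/-- the pairing `⟨χ, γ⟩` between a character of `T` and a cocharacter of `T`
(with junk value `0` if `γ` does not take values in `T`) -/
def pairing (T : Subgroup Gd.G) (χ : ↥T →* kˣ) (γ : kˣ →* Gd.G) : ℤ :=
  if h : ∀ t : kˣ, γ t ∈ T then Gd.deg (χ.comp (γ.codRestrict T h)) else 0

/-- a *state* assigns a set of characters to each (sub)torus of `G` -/
def StateFun : Type u :=
  (R : Subgroup Gd.G) → Set (↥R →* kˣ)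

/-- restriction of characters along an inclusion of subgroups -/
def restrictChar {R₁ R₂ : Subgroup Gd.G} (h : R₁ ≤ R₂) (χ : ↥R₂ →* kˣ) :
    ↥R₁ →* kˣ :=
  χ.comp (Subgroup.inclusion h)

/-- `Ξ` is a state: it assigns a nonempty set of characters to each torus,
compatibly with restriction -/
def IsState (Ξ : Gd.StateFun) : Prop :=
  (∀ R, Gd.isTorus R → (Ξ R).Nonempty ∧ ∀ χ ∈ Ξ R, Gd.isChar R χ) ∧
  ∀ (R₁ R₂ : Subgroup Gd.G) (h : R₁ ≤ R₂), Gd.isTorus R₁ → Gd.isTorus R₂ →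
    Ξ R₁ = Gd.restrictChar h '' Ξ R₂

/-- the conjugate subgroup `gRg⁻¹` -/
def conjSubgroup (g : Gd.G) (R : Subgroup Gd.G) : Subgroup Gd.G :=
  Subgroup.map ↑(MulAut.conj g) R

/-- `g_! χ : r ↦ χ(g⁻¹ r g)`, for `χ` a character of `g⁻¹Rg` -/
def pushChar (g : Gd.G) (R : Subgroup Gd.G)
    (χ : ↥(Gd.conjSubgroup g⁻¹ R) →* kˣ) : ↥R →* kˣ :=
  χ.comp ((MulAut.conj g⁻¹ : Gd.G ≃* Gd.G).subgroupMap R).toMonoidHom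

/-- the conjugate state `g_*Ξ`, `(g_*Ξ)(R) = g_! Ξ(g⁻¹Rg)` -/
def starState (g : Gd.G) (Ξ : Gd.StateFun) : Gd.StateFun :=
  fun R => Gd.pushChar g R '' Ξ (Gd.conjSubgroup g⁻¹ R)

/-- `Ξ` is bounded: `⋃_{g ∈ G} (g_*Ξ)(R)` is finite for every torus `R` -/
def IsBoundedState (Ξ : Gd.StateFun) : Prop :=
  ∀ R, Gd.isTorus R → {χ : ↥R →* kˣ | ∃ g : Gd.G, χ ∈ Gd.starState g Ξ R}.Finite

/-- the numerical function `μ(Ξ, γ) = min_{χ ∈ Ξ(γ(𝔾ₘ))} ⟨χ, γ⟩` -/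
def numerical (Ξ : Gd.StateFun) (γ : kˣ →* Gd.G) : ℤ :=
  sInf {n : ℤ | ∃ χ ∈ Ξ γ.range, Gd.pairing γ.range χ γ = n}

/-- `Ξ` is admissible: `μ(Ξ, p•γ) = μ(Ξ, γ)` for all `p ∈ P(γ)` -/
def IsAdmissibleState (Ξ : Gd.StateFun) : Prop :=
  ∀ γ, Gd.isOnePS γ → ∀ p ∈ Gd.Pparab γ,
    Gd.numerical Ξ (Gd.conjPS p γ) = Gd.numerical Ξ γ

/-- a *Kempf state* is a bounded admissible state -/
def IsKempfState (Ξ : Gd.StateFun) : Prop :=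
  Gd.IsState Ξ ∧ Gd.IsBoundedState Ξ ∧ Gd.IsAdmissibleState Ξ

/-- `Ξ^∨ = {γ ∈ 𝔛_*(G) : μ(Ξ, γ) ≥ 0}` -/
def dualCone (Ξ : Gd.StateFun) : Set (kˣ →* Gd.G) :=
  {γ | Gd.isOnePS γ ∧ 0 ≤ Gd.numerical Ξ γ}

/-- `ρ` is an extremal ray of the cone `σ` (of cocharacters of a torus):
a one-dimensional face of `σ` -/
def IsExtremalRay (σ ρ : Set (kˣ →* Gd.G)) : Prop :=
  ρ ⊆ σ ∧ (∃ γ ∈ ρ, γ ≠ 1) ∧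
  (∀ γ₁ γ₂, γ₁ ∈ ρ → γ₂ ∈ ρ → γ₁ ≠ 1 → γ₂ ≠ 1 →
    ∃ m n : ℕ, 0 < m ∧ 0 < n ∧ Gd.powPS γ₁ m = Gd.powPS γ₂ n) ∧
  (∀ γ₁ γ₂ (h : ∀ s t : kˣ, Commute (γ₁ s) (γ₂ t)),
    γ₁ ∈ σ → γ₂ ∈ σ → Gd.addPS γ₁ γ₂ h ∈ ρ → γ₁ ∈ ρ ∧ γ₂ ∈ ρ)

/-- the one-skeleton `Γ₁` of a set `Γ` of one-parameter subgroups: the union,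
over all maximal tori `T`, of the extremal rays of the cones `Γ ∩ 𝔛_*(T)` -/
def oneSkeleton (Γ : Set (kˣ →* Gd.G)) : Set (kˣ →* Gd.G) :=
  {γ | ∃ T : Subgroup Gd.G, Gd.IsMaxTorus T ∧
    ∃ ρ, Gd.IsExtremalRay (Γ ∩ Gd.cochar T) ρ ∧ γ ∈ ρ}

/-- `Γ` is saturated with respect to the equivalence relation `∼` -/
def IsSaturated (Γ : Set (kˣ →* Gd.G)) : Prop :=
  ∀ γ₁ ∈ Γ, ∀ γ₂, Gd.isOnePS γ₂ → Gd.PSEquiv γ₁ γ₂ → γ₂ ∈ Γ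

/-- `Γ₁/∼` is finite: finitely many one-parameter subgroups represent all
equivalence classes of nontrivial elements of the one-skeleton -/
def FiniteSkeleton (Γ : Set (kˣ →* Gd.G)) : Prop :=
  ∃ S : Set (kˣ →* Gd.G), S.Finite ∧
    ∀ γ ∈ Gd.oneSkeleton Γ, γ ≠ 1 → ∃ δ ∈ S, Gd.PSEquiv δ γ

/-- `Γ` is a lattice cone: a saturated set of one-parameter subgroups whose
one-skeleton has finitely many equivalence classes -/
def IsLatticeCone (Γ : Set (kˣ →* Gd.G)) : Prop :=
  (∀ γ ∈ Γ, Gd.isOnePS γ) ∧ Gd.IsSaturated Γ ∧ Gd.FiniteSkeleton Γ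

/-- `Γ` is a convex lattice cone: a lattice cone of the form `Ξ^∨` for some
Kempf state `Ξ` -/
def IsConvexLatticeCone (Γ : Set (kˣ →* Gd.G)) : Prop :=
  Gd.IsLatticeCone Γ ∧ ∃ Ξ, Gd.IsKempfState Ξ ∧ Γ = Gd.dualCone Ξ

/-- `Γ` is a strongly convex lattice cone: a convex lattice cone containing
no pair `γ, γ⁻¹` with `γ` nontrivial -/
def IsStronglyConvexLatticeCone (Γ : Set (kˣ →* Gd.G)) : Prop :=
  Gd.IsConvexLatticeCone Γ ∧ ∀ γ ∈ Γ, Gd.invPS γ ∈ Γ → γ = 1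

/-- `σ` is a strongly convex rational polyhedral cone in `𝔛_*(T)`:
the set of lattice points of the dual of a finite set of characters of `T`,
containing no nontrivial pair `γ, γ⁻¹` -/
def IsSCRPCone (T : Subgroup Gd.G) (σ : Set (kˣ →* Gd.G)) : Prop :=
  (∃ S : Set (↥T →* kˣ), S.Finite ∧ (∀ χ ∈ S, Gd.isChar T χ) ∧
    σ = {γ ∈ Gd.cochar T | ∀ χ ∈ S, 0 ≤ Gd.pairing T χ γ}) ∧
  ∀ γ ∈ σ, Gd.invPS γ ∈ σ → γ = 1

/-- the dual monoid `σ^∨ ∩ 𝔛^*(T)` of a cone `σ ⊆ 𝔛_*(T)` -/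
def dualMonoid (T : Subgroup Gd.G) (σ : Set (kˣ →* Gd.G)) : Set (↥T →* kˣ) :=
  {χ | Gd.isChar T χ ∧ ∀ γ ∈ σ, 0 ≤ Gd.pairing T χ γ}

/-- `φ` is a point of the affine toric variety `T_σ = Spec k[σ^∨ ∩ 𝔛^*(T)]`:
a monoid homomorphism from the dual monoid `σ^∨ ∩ 𝔛^*(T)` to `(k, ·)`
(recorded as a function on all characters, extended by zero) -/
def IsToricPoint (T : Subgroup Gd.G) (σ : Set (kˣ →* Gd.G))
    (φ : (↥T →* kˣ) → k) : Prop :=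
  φ 1 = 1 ∧
  (∀ χ₁ ∈ Gd.dualMonoid T σ, ∀ χ₂ ∈ Gd.dualMonoid T σ,
    φ (χ₁ * χ₂) = φ χ₁ * φ χ₂) ∧
  ∀ χ, χ ∉ Gd.dualMonoid T σ → φ χ = 0

/-- the state `G_*Ξ : R ↦ ⋃_{g ∈ G} (g_*Ξ)(R)` -/
def gStarState (Ξ : Gd.StateFun) : Gd.StateFun :=
  fun R => {χ | ∃ g : Gd.G, χ ∈ Gd.starState g Ξ R}

/-- `Γ^G = ⋂_{h ∈ G} hΓh⁻¹`, the largest conjugation-stable subset of `Γ` -/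
def coreCone (Γ : Set (kˣ →* Gd.G)) : Set (kˣ →* Gd.G) :=
  ⋂ h : Gd.G, Gd.conjCone h Γ

end ReductiveGroup

/-- `D` is an irreducible component of the subset `S` of a topological space:
a maximal irreducible subset of `S` -/
def IsIrreducibleComponentOf {α : Type*} [TopologicalSpace α]
    (D S : Set α) : Prop :=
  IsIrreducible D ∧ D ⊆ S ∧ ∀ D', IsIrreducible D' → D' ⊆ S → D ⊆ D' → D' = D

variable {k} in
/-- Axiomatized data of the coordinate ring `k[G]` of the reductive group `G`,
together with translations and the (Luna–Vust) valuations `v_γ` of the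
function field `k(G)` attached to one-parameter subgroups `γ`. -/
structure GroupCoordinates (Gd : ReductiveGroup k) where
  /-- the coordinate ring `k[G]` -/
  A : Type u
  [ringA : CommRing A]
  [algA : Algebra k A]
  [domA : IsDomain A]
  fgA : Algebra.FiniteType k A
  /-- the `k`-points of `G` are the `k`-algebra homomorphisms `k[G] → k` -/
  pt : Gd.G ≃ (A →ₐ[k] k)
  pt_separates : ∀ f₁ f₂ : A, (∀ g : Gd.G, pt g f₁ = pt g f₂) → f₁ = f₂
  /-- left translation: `(ℓ_h f)(x) = f(h⁻¹x)` -/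
  lt : Gd.G → (A ≃ₐ[k] A)
  lt_spec : ∀ (h x : Gd.G) (f : A), pt x (lt h f) = pt (h⁻¹ * x) f
  /-- right translation: `(r_h f)(x) = f(xh)` -/
  rt : Gd.G → (A ≃ₐ[k] A)
  rt_spec : ∀ (h x : Gd.G) (f : A), pt x (rt h f) = pt (x * h) f
  /-- the normalized valuation `v_γ` on the function field `k(G)` attached to
  the one-parameter subgroup `γ` (junk value `0` at `0`) -/
  v : (kˣ →* Gd.G) → FractionRing A → ℤ
  v_zero : ∀ γ, v γ 0 = 0
  v_mul : ∀ (γ : kˣ →* Gd.G) (x y : FractionRing A), x ≠ 0 → y ≠ 0 →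
    v γ (x * y) = v γ x + v γ y
  v_left_invariant : ∀ (γ : kˣ →* Gd.G) (h : Gd.G) (f : A),
    v γ (algebraMap A (FractionRing A) (lt h f)) =
      v γ (algebraMap A (FractionRing A) f)
  /-- `v_γ(f) ≥ 0` for a regular function `f` on `G` precisely when all the
  Laurent polynomials `t ↦ f(g·γ(t))` are polynomials (Luna–Vust) -/
  v_nonneg_iff : ∀ γ, Gd.isOnePS γ → ∀ f : A, f ≠ 0 →
    (0 ≤ v γ (algebraMap A (FractionRing A) f) ↔
      ∀ g : Gd.G, ∃ p : Polynomial k, ∀ t : kˣ, p.eval (t : k) = pt (g * γ t) f)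

attribute [instance] GroupCoordinates.ringA GroupCoordinates.algA
  GroupCoordinates.domA

namespace GroupCoordinates

variable {k} {Gd : ReductiveGroup k} (Cd : GroupCoordinates Gd)

/-- the valuation ring `O_{v_γ} = {f ∈ k(G) : v_γ(f) ≥ 0}` -/
def valuationRing (γ : kˣ →* Gd.G) : Set (FractionRing Cd.A) :=
  {f | 0 ≤ Cd.v γ f}

/-- `A_Γ = {f ∈ k[G] : v_γ(f) ≥ 0 for all γ ∈ Γ}` -/
def AΓ (Γ : Set (kˣ →* Gd.G)) : Set Cd.A :=
  {f | ∀ γ ∈ Γ, 0 ≤ Cd.v γ (algebraMap Cd.A (FractionRing Cd.A) f)}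

/-- the maximal ideal `m_e ⊆ k[G]` of the identity element -/
def idealOfIdentity : Set Cd.A := {f | Cd.pt 1 f = 0}

end GroupCoordinates

variable {k} in
/-- Axiomatized data of an affine `G`-embedding: a normal affine `G`-variety
`X` (with finitely generated coordinate ring `B = k[X]`, points `X ≃ k`-algebra
homomorphisms `B → k`, and the Zariski topology), containing an open orbit
isomorphic to `G` (expressed through the predicate `IsBasePoint` below),
together with limits of one-parameter subgroups and of `k((t))`-points of `G`
at points of `X`, and the comorphisms `ψ_x^∘ : k[X] → k[G]` of the orbit maps. -/
structure AffineGEmbedding (Gd : ReductiveGroup k) (Cd : GroupCoordinates Gd) where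
  /-- the points of the variety `X` -/
  X : Type u
  [topX : TopologicalSpace X]
  [acts : MulAction Gd.G X]
  /-- the coordinate ring `k[X]` -/
  B : Type u
  [ringB : CommRing B]
  [algB : Algebra k B]
  [domB : IsDomain B]
  fgB : Algebra.FiniteType k B
  /-- normality of `X` -/
  normalB : IsIntegrallyClosed B
  /-- the points of the affine variety `X` are the `k`-algebra homomorphisms
  `k[X] → k` -/
  ptX : X ≃ (B →ₐ[k] k)
  ptX_separates : ∀ f₁ f₂ : B, (∀ x : X, ptX x f₁ = ptX x f₂) → f₁ = f₂
  /-- the topology on `X` is the Zariski topology -/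
  zariski : ∀ s : Set X, IsClosed s ↔ ∃ I : Set B, s = {x | ∀ f ∈ I, ptX x f = 0}
  /-- the comorphism `ψ_x^∘ : k[X] → k[G]` of the orbit map `ψ_x : g ↦ g•x` -/
  psi : X → (B →ₐ[k] Cd.A)
  psi_spec : ∀ (x : X) (f : B) (g : Gd.G), Cd.pt g (psi x f) = ptX (g • x) f
  /-- `lim_{t→0} γ(t)·x` exists in `X` -/
  limExists : (kˣ →* Gd.G) → X → Prop
  /-- the limit `lim_{t→0} γ(t)·x`, when it exists -/
  limit : (kˣ →* Gd.G) → X → X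
  /-- the limit exists iff every regular function `f` on `X` extends the Laurent
  polynomial `t ↦ f(γ(t)·x)` polynomially, i.e. `t ↦ γ(t)·x` extends to `𝔸¹ → X` -/
  limExists_iff : ∀ (γ : kˣ →* Gd.G), Gd.isOnePS γ → ∀ x : X,
    (limExists γ x ↔
      ∀ f : B, ∃ p : Polynomial k, ∀ t : kˣ, p.eval (t : k) = ptX (γ t • x) f)
  /-- the value of a regular function at the limit point is the value at `0`
  of the polynomial extension -/
  limit_spec : ∀ (γ : kˣ →* Gd.G) (x : X) (f : B) (p : Polynomial k),
    limExists γ x → (∀ t : kˣ, p.eval (t : k) = ptX (γ t • x) f) →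
    ptX (limit γ x) f = p.eval 0
  /-- `lim_{t→0} λ(t)·x` exists in `X`, for a `k((t))`-point `λ` of `G` -/
  limExistsK : Gd.GK → X → Prop
  /-- the limit `lim_{t→0} λ(t)·x` for a `k((t))`-point `λ`, when it exists -/
  limitK : Gd.GK → X → X
  limK_const : ∀ (g : Gd.G) (x : X), limExistsK (Gd.toGK g) x ∧
    limitK (Gd.toGK g) x = g • x
  limK_onePS : ∀ γ, Gd.isOnePS γ → ∀ x : X,
    (limExistsK (Gd.psK γ) x ↔ limExists γ x) ∧ limitK (Gd.psK γ) x = limit γ x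

attribute [instance] AffineGEmbedding.topX AffineGEmbedding.acts
  AffineGEmbedding.ringB AffineGEmbedding.algB AffineGEmbedding.domB

namespace AffineGEmbedding

variable {k} {Gd : ReductiveGroup k} {Cd : GroupCoordinates Gd}
variable (E : AffineGEmbedding Gd Cd)

/-- `Γ(X, x₀) = {γ ∈ 𝔛_*(G) : lim_{t→0} γ(t)·x₀ exists in X}` -/
def Gamma (x₀ : E.X) : Set (kˣ →* Gd.G) :=
  {γ | Gd.isOnePS γ ∧ E.limExists γ x₀}

/-- `x₀` is a base point of the `G`-embedding `X`: its orbit is open and the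
orbit map `g ↦ g • x₀` identifies `G` with the open orbit `Ω` -/
def IsBasePoint (x₀ : E.X) : Prop :=
  IsOpen (MulAction.orbit Gd.G x₀) ∧
    Function.Injective (fun g : Gd.G => g • x₀)

end AffineGEmbedding

variable {k} in
/-- An equivariant morphism of affine `G`-embeddings: a `G`-equivariant map on
points together with the corresponding comorphism of coordinate rings. -/
structure GMorphism {Gd : ReductiveGroup k} {Cd : GroupCoordinates Gd}
    (E₁ E₂ : AffineGEmbedding Gd Cd) where
  toFun : E₁.X → E₂.X
  comorph : E₂.B →ₐ[k] E₁.B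
  compat : ∀ (x : E₁.X) (f : E₂.B), E₁.ptX x (comorph f) = E₂.ptX (toFun x) f
  equivariant : ∀ (g : Gd.G) (x : E₁.X), toFun (g • x) = g • toFun x

variable {k} in
/-- A right `G`-action on the affine `G`-embedding `X` by variety
automorphisms, commuting with the left action and extending right
multiplication of `G` on the open orbit through the base point `x₀`;
this makes `X` a biequivariant (`(G×G)`-equivariant) `G`-embedding. -/
structure RightActionData {Gd : ReductiveGroup k} {Cd : GroupCoordinates Gd}
    (E : AffineGEmbedding Gd Cd) (x₀ : E.X) where
  /-- the right action `x ↦ x · h` -/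
  ra : Gd.G → E.X → E.X
  /-- the comorphism of `x ↦ x · h` -/
  rb : Gd.G → (E.B ≃ₐ[k] E.B)
  ra_one : ∀ x, ra 1 x = x
  ra_mul : ∀ g h x, ra (g * h) x = ra h (ra g x)
  compat : ∀ (h : Gd.G) (x : E.X) (f : E.B), E.ptX (ra h x) f = E.ptX x (rb h f)
  commutes : ∀ (g h : Gd.G) (x : E.X), ra h (g • x) = g • ra h x
  extends_mul : ∀ g h : Gd.G, ra h (g • x₀) = (g * h) • x₀

end

noncomputable section
universe u

/-- If `p(t) = q(1/t)` for all nonzero `t` in an infinite field, then `p` is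
constant on the nonzero elements. -/
private lemma aux_const_of_eval_eq_eval_inv {k : Type u} [Field k] [Infinite k]
    (p q : Polynomial k) (h : ∀ t : kˣ, p.eval (t : k) = q.eval ((t⁻¹ : kˣ) : k)) :
    ∀ t : kˣ, p.eval (t : k) = p.eval 1 := by
  set n := q.natDegree with hn
  set r := q.reverse - Polynomial.X ^ n * p with hr
  have hroot : ∀ t : kˣ, r.IsRoot (t : k) := by
    intro t
    have inst : Invertible ((t⁻¹ : kˣ) : k) := (t⁻¹).invertible
    have key := Polynomial.eval₂_reverse_mul_pow (RingHom.id k) ((t⁻¹ : kˣ) : k) q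
    rw [invOf_units] at key
    simp only [inv_inv] at key
    have key' : q.reverse.eval (t : k) * ((t⁻¹ : kˣ) : k) ^ n = q.eval ((t⁻¹ : kˣ) : k) :=
      key
    have hrev : q.reverse.eval (t : k) = p.eval (t : k) * (t : k) ^ n := by
      have ht : ((t⁻¹ : kˣ) : k) ^ n * (t : k) ^ n = 1 := by
        rw [← mul_pow]
        simp
      calc q.reverse.eval (t : k)
          = q.reverse.eval (t : k) * (((t⁻¹ : kˣ) : k) ^ n * (t : k) ^ n) := by
            rw [ht, mul_one]
        _ = (q.reverse.eval (t : k) * ((t⁻¹ : kˣ) : k) ^ n) * (t : k) ^ n := by ring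
        _ = q.eval ((t⁻¹ : kˣ) : k) * (t : k) ^ n := by rw [key']
        _ = p.eval (t : k) * (t : k) ^ n := by rw [h t]
    simp only [Polynomial.IsRoot, hr, Polynomial.eval_sub, Polynomial.eval_mul,
      Polynomial.eval_pow, Polynomial.eval_X, hrev]
    ring
  have hr0 : r = 0 := by
    apply Polynomial.eq_zero_of_infinite_isRoot
    have hsub : ({(0 : k)}ᶜ : Set k) ⊆ {x | r.IsRoot x} := by
      intro x hx
      have hx0 : x ≠ 0 := hx
      simpa using hroot (Units.mk0 x hx0)
    exact ((Set.finite_singleton (0 : k)).infinite_compl).mono hsub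
  have heq : q.reverse = Polynomial.X ^ n * p := by
    have := sub_eq_zero.mp hr0
    exact this
  by_cases hp : p = 0
  · intro t; simp [hp]
  · have hdeg : p.natDegree = 0 := by
      have h1 : (Polynomial.X ^ n * p).natDegree ≤ n := by
        rw [← heq]; exact q.reverse_natDegree_le
      have h2 : (Polynomial.X ^ n * p).natDegree = n + p.natDegree := by
        rw [Polynomial.natDegree_mul (pow_ne_zero _ Polynomial.X_ne_zero) hp, Polynomial.natDegree_X_pow]
      omega
    obtain ⟨c, hc⟩ : ∃ c, p = Polynomial.C c :=
      ⟨p.coeff 0, Polynomial.eq_C_of_natDegree_eq_zero hdeg⟩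
    intro t
    simp [hc]

/-- Let `X` be an affine `G`-embedding with base point `x₀`.
If `γ ∈ Γ(X, x₀)` and `γ` is not the trivial one-parameter subgroup `ε`, then
`γ⁻¹ ∉ Γ(X, x₀)`. -/
theorem invPS_not_mem_gamma
    {k : Type u} [Field k] [IsAlgClosed k] [CharZero k]
    {Gd : ReductiveGroup k} {Cd : GroupCoordinates Gd}
    (E : AffineGEmbedding Gd Cd) (x₀ : E.X) (hx₀ : E.IsBasePoint x₀)
    (γ : kˣ →* Gd.G) (hγ : γ ∈ E.Gamma x₀) (hne : γ ≠ 1) :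
    Gd.invPS γ ∉ E.Gamma x₀ := by
  intro hinv
  apply hne
  have h1 := (E.limExists_iff γ hγ.1 x₀).mp hγ.2
  have h2 := (E.limExists_iff (Gd.invPS γ) (Gd.inv_isOnePS γ hγ.1) x₀).mp hinv.2
  have key : ∀ (t : kˣ) (f : E.B), E.ptX (γ t • x₀) f = E.ptX x₀ f := by
    intro t f
    obtain ⟨p, hp⟩ := h1 f
    obtain ⟨q, hq⟩ := h2 f
    have h : ∀ s : kˣ, p.eval (s : k) = q.eval ((s⁻¹ : kˣ) : k) := by
      intro s
      rw [hp s, hq s⁻¹]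
      have : Gd.invPS γ s⁻¹ = γ s := by
        show γ ((s⁻¹)⁻¹) = γ s
        rw [inv_inv]
      rw [this]
    have hc := aux_const_of_eval_eq_eval_inv p q h
    calc E.ptX (γ t • x₀) f = p.eval (t : k) := (hp t).symm
      _ = p.eval 1 := hc t
      _ = p.eval ((1 : kˣ) : k) := by norm_num
      _ = E.ptX (γ 1 • x₀) f := hp 1
      _ = E.ptX x₀ f := by simp
  have hx : ∀ t : kˣ, γ t • x₀ = x₀ := fun t =>
    E.ptX.injective (AlgHom.ext (key t))
  ext t
  have h1x : (fun g : Gd.G => g • x₀) (γ t) = (fun g : Gd.G => g • x₀) 1 := by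
    simpa using hx t
  simpa using hx₀.2 h1x

end
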